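/- Let 𝒞 be a category, let (C_n)_{n∈ℕ} be a family of objects of 𝒞, and let ε^n_i : C_{n+1} → C_n (1 ≤ i ≤ n) and σ^n_i : C_n → C_n (1 ≤ i ≤ n−1) be morphisms satisfying (diagrammatic composition) the pure codegeneracy relations ε_i;ε_j = ε_{j+1};ε_i (i ≤ j), the Moore relations σ_i;σ_i = 1, σ_i;σ_{i+1};σ_i = σ_{i+1};σ_i;σ_{i+1}, σ_j;σ_i = σ_i;σ_j (i < j−1), and the codegeneracy–symmetry relations ε_j;σ_i = σ_i;ε_j (i < j−1), ε_j;σ_i = σ_{i+1};ε_j (i > j), ε_i;σ_i = σ_{i+1};σ_i;ε_{i+1}, σ_i;ε_i = ε_i. Then there is a unique functor F : finCard_s → 𝒞 with F(n) = C_n, F(ε^n_i) = ε^n_i, and F(σ^n_i) = σ^n_i. -/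

import Mathlib

open CategoryTheory

/-- The category of finite cardinals and surjections: objects are natural numbers, and
morphisms `n ⟶ m` are the surjective functions `Fin n → Fin m` (composition is
diagrammatic). -/
structure FinCardS : Type where
  len : ℕ

instance : Category FinCardS where
  Hom n m := {f : Fin n.len → Fin m.len // Function.Surjective f}
  id _ := ⟨_root_.id, Function.surjective_id⟩
  comp f g := ⟨g.1 ∘ f.1, g.2.comp f.2⟩
  id_comp _ := rfl
  comp_id _ := rfl
  assoc _ _ _ := rfl

/-- The object of `FinCardS` corresponding to `n : ℕ`. -/
def FinCardS.of (n : ℕ) : FinCardS := ⟨n⟩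

/-- The codegeneracy function `ε^n_i : [n+1] → [n]` (1-based: `x ↦ x` if `x ≤ i`,
`x ↦ x−1` if `x > i`), written 0-based on `Fin`. Requires `1 ≤ i ≤ n`. -/
def epsF (n i : ℕ) (h1 : 1 ≤ i) (h2 : i ≤ n) : Fin (n + 1) → Fin n := fun x =>
  if h : x.val < i then ⟨x.val, by omega⟩
  else ⟨x.val - 1, by have := x.isLt; omega⟩

lemma epsF_surj (n i : ℕ) (h1 : 1 ≤ i) (h2 : i ≤ n) :
    Function.Surjective (epsF n i h1 h2) := by
  intro y
  by_cases hy : y.val < i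
  · exact ⟨⟨y.val, by omega⟩, by simp [epsF, hy]⟩
  · refine ⟨⟨y.val + 1, by have := y.isLt; omega⟩, ?_⟩
    simp only [epsF]
    rw [dif_neg (by omega)]
    apply Fin.ext
    simp

/-- The codegeneracy `ε^n_i` as a morphism of `FinCardS`. -/
def epsHomS (n i : ℕ) (h1 : 1 ≤ i) (h2 : i ≤ n) : FinCardS.of (n + 1) ⟶ FinCardS.of n :=
  ⟨epsF n i h1 h2, epsF_surj n i h1 h2⟩

/-- The symmetry `σ^n_i : [n] → [n]` (the transposition exchanging `i` and `i+1`, 1-based;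
i.e. of `i−1` and `i` in 0-based terms) as a morphism of `FinCardS`.
Requires `1 ≤ i ≤ n−1`. -/
def sigmaHomS (n i : ℕ) (h1 : 1 ≤ i) (h2 : i + 1 ≤ n) : FinCardS.of n ⟶ FinCardS.of n :=
  ⟨⇑(Equiv.swap (⟨i - 1, by omega⟩ : Fin n) ⟨i, by omega⟩), (Equiv.swap _ _).surjective⟩

/-!
A surjection `f : [n] → [m]` is rewritten towards the identity of `[m]` by two kinds of steps:
precomposing with `σ_i` removes a descent `f(i) < f(i-1)`, and when `f(i-1) = f(i)` the
surjection factors as `ε_i ; g` and is replaced by `g`. Every step makes `f`, ordered first by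
`n` and then lexicographically, smaller, and only the identity admits no step. Labelling the
steps by the given `σ^n_i` and `ε^n_i`, the relations are exactly what is needed to close every
critical pair with equal labels, so by Newman's lemma all reductions of `f` to the identity carry
the same label; this label is `F f`. Functoriality and uniqueness then follow by induction along
such a reduction.
-/

namespace CategoryTheory

variable {V 𝒞 : Type*} [Category 𝒞] {obj : V → 𝒞}

inductive LabelledReflTransGen (R : ∀ x y : V, (obj x ⟶ obj y) → Prop) :
    ∀ x y : V, (obj x ⟶ obj y) → Prop
  | refl (x : V) : LabelledReflTransGen R x x (𝟙 (obj x))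
  | head {x y z : V} {a : obj x ⟶ obj y} {p : obj y ⟶ obj z} :
      R x y a → LabelledReflTransGen R y z p → LabelledReflTransGen R x z (a ≫ p)

namespace LabelledReflTransGen

variable {R : ∀ x y : V, (obj x ⟶ obj y) → Prop}

theorem single {x y : V} {a : obj x ⟶ obj y} (h : R x y a) : LabelledReflTransGen R x y a := by
  simpa using head h (refl y)

theorem trans {x y z : V} {p : obj x ⟶ obj y} {q : obj y ⟶ obj z}
    (hp : LabelledReflTransGen R x y p) (hq : LabelledReflTransGen R y z q) :
    LabelledReflTransGen R x z (p ≫ q) := by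
  induction hp with
  | refl => simpa using hq
  | head ha _ ih => simpa using head ha (ih hq)

theorem eq_comp {T : 𝒞} {Φ : ∀ x, obj x ⟶ T} (hΦ : ∀ x y a, R x y a → Φ x = a ≫ Φ y)
    {x y : V} {p : obj x ⟶ obj y} (hp : LabelledReflTransGen R x y p) : Φ x = p ≫ Φ y := by
  induction hp with
  | refl => exact (Category.id_comp _).symm
  | head ha _ ih => rw [hΦ _ _ _ ha, ih, Category.assoc]

def Joinable (R : ∀ x y : V, (obj x ⟶ obj y) → Prop) {x : V} (y z : V) (a : obj x ⟶ obj y)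
    (b : obj x ⟶ obj z) : Prop :=
  ∃ w p q, LabelledReflTransGen R y w p ∧ LabelledReflTransGen R z w q ∧ a ≫ p = b ≫ q

theorem Joinable.symm {x y z : V} {a : obj x ⟶ obj y} {b : obj x ⟶ obj z}
    (h : Joinable R y z a b) : Joinable R z y b a := by
  obtain ⟨w, p, q, hp, hq, h⟩ := h
  exact ⟨w, q, p, hq, hp, h.symm⟩

variable (hwf : WellFounded fun y x => ∃ a, R x y a) {x₀ : V}
include hwf

theorem exists_of_wellFounded (hstep : ∀ x, x ≠ x₀ → ∃ y a, R x y a) (x : V) :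
    ∃ p, LabelledReflTransGen R x x₀ p := by
  induction x using hwf.induction with
  | _ x ih =>
  by_cases hx : x = x₀
  · subst hx
    exact ⟨_, refl x⟩
  · obtain ⟨y, a, ha⟩ := hstep x hx
    obtain ⟨p, hp⟩ := ih y ⟨a, ha⟩
    exact ⟨_, head ha hp⟩

/-- Newman's lemma, for reductions labelled by morphisms. -/
theorem eq_of_wellFounded (hx₀ : ∀ y a, ¬R x₀ y a) (hstep : ∀ x, x ≠ x₀ → ∃ y a, R x y a)
    (hconf : ∀ x y z a b, R x y a → R x z b → Joinable R y z a b) {x : V}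
    {p q : obj x ⟶ obj x₀} (hp : LabelledReflTransGen R x x₀ p)
    (hq : LabelledReflTransGen R x x₀ q) : p = q := by
  induction x using hwf.induction with
  | _ x ih =>
  cases hp with
  | refl =>
    cases hq with
    | refl => rfl
    | head hb => exact (hx₀ _ _ hb).elim
  | head ha hp' =>
    cases hq with
    | refl => exact (hx₀ _ _ ha).elim
    | head hb hq' =>
      obtain ⟨w, r, s, hr, hs, hrs⟩ := hconf _ _ _ _ _ ha hb
      obtain ⟨t, ht⟩ := exists_of_wellFounded hwf hstep w
      rw [ih _ ⟨_, ha⟩ hp' (hr.trans ht), ih _ ⟨_, hb⟩ hq' (hs.trans ht),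
        ← Category.assoc, hrs, Category.assoc]

end LabelledReflTransGen

end CategoryTheory

namespace FinCardS

instance {X Y : FinCardS} (f : X ⟶ Y) : Epi f :=
  ⟨fun _ _ h => Subtype.ext (f.2.injective_comp_right (congrArg Subtype.val h))⟩

/-- `f` at position `k`, read in `ℕ`; junk value `0` when `k` is out of range. -/
def valAt {X Y : FinCardS} (f : X ⟶ Y) (k : ℕ) : ℕ :=
  if h : k < X.len then f.1 ⟨k, h⟩ else 0

variable {n m l k : ℕ}

theorem valAt_of_lt (f : of n ⟶ of m) (hk : k < n) : valAt f k = f.1 ⟨k, hk⟩ :=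
  dif_pos hk

theorem valAt_lt (f : of n ⟶ of m) (hk : k < n) : valAt f k < m := by
  rw [valAt_of_lt f hk]
  exact (f.1 _).2

theorem hom_ext_valAt {f g : of n ⟶ of m} (h : ∀ k < n, valAt f k = valAt g k) : f = g := by
  refine Subtype.ext (funext fun x => Fin.ext ?_)
  simpa only [valAt_of_lt f x.2, valAt_of_lt g x.2, Fin.eta] using h x x.2

theorem valAt_comp (f : of n ⟶ of m) (g : of m ⟶ of l) (hk : k < n) :
    valAt (f ≫ g) k = valAt g (valAt f k) := by
  have e : f.1 ⟨k, hk⟩ = (⟨valAt f k, valAt_lt f hk⟩ : Fin (of m).len) :=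
    Fin.ext (valAt_of_lt f hk).symm
  rw [valAt_of_lt _ hk, valAt_of_lt g (valAt_lt f hk), ← e]
  rfl

theorem valAt_id (hk : k < n) : valAt (𝟙 (of n)) k = k :=
  valAt_of_lt _ hk

theorem valAt_epsHomS {i : ℕ} (h1 : 1 ≤ i) (h2 : i ≤ n) (hk : k < n + 1) :
    valAt (epsHomS n i h1 h2) k = if k < i then k else k - 1 := by
  rw [valAt_of_lt _ hk]
  change ((epsF n i h1 h2 ⟨k, hk⟩ : Fin n) : ℕ) = _
  simp only [epsF]
  split_ifs <;> rfl

theorem valAt_sigmaHomS {i : ℕ} (h1 : 1 ≤ i) (h2 : i + 1 ≤ n) (hk : k < n) :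
    valAt (sigmaHomS n i h1 h2) k = if k = i - 1 then i else if k = i then i - 1 else k := by
  rw [valAt_of_lt _ hk]
  change ((Equiv.swap (⟨i - 1, by omega⟩ : Fin n) ⟨i, by omega⟩) ⟨k, hk⟩ : ℕ) = _
  rw [Equiv.swap_apply_def]
  split_ifs <;> simp only [Fin.ext_iff] at * <;> omega

theorem val_apply_eq_valAt (f : of n ⟶ of m) (x : Fin (of n).len) : (f.1 x : ℕ) = valAt f x :=
  (valAt_of_lt f x.2).symm

theorem exists_eq_epsHomS_comp {i : ℕ} (h1 : 1 ≤ i) (h2 : i ≤ n) (f : of (n + 1) ⟶ of m)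
    (hf : valAt f (i - 1) = valAt f i) : ∃ g, f = epsHomS n i h1 h2 ≫ g := by
  let δ : ℕ → ℕ := fun x => if x < i then x else x + 1
  have hδ_lt : ∀ x < n, δ x < n + 1 := fun x hx => by simp only [δ]; split_ifs <;> omega
  have hδ : ∀ k < n + 1, valAt f (δ (if k < i then k else k - 1)) = valAt f k := by
    intro k hk
    rcases (by omega : k < i ∨ k = i ∨ i < k) with h | rfl | h
    · simp only [δ, if_pos h]
    · simpa (disch := omega) only [δ, if_pos, if_neg] using hf
    · simp (disch := omega) only [δ, if_neg, Nat.sub_add_cancel]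
  let g : Fin n → Fin m := fun x => f.1 ⟨δ x, hδ_lt x x.2⟩
  have hfg : f.1 = g ∘ epsF n i h1 h2 := by
    funext ⟨k, hk⟩
    apply Fin.ext
    rw [← valAt_of_lt f hk, ← hδ k hk, ← valAt_epsHomS h1 h2 hk, valAt_of_lt (epsHomS n i h1 h2) hk]
    exact valAt_of_lt f (hδ_lt _ (Fin.isLt _))
  have hg : Function.Surjective (g ∘ epsF n i h1 h2) := hfg ▸ f.2
  exact ⟨⟨g, hg.of_comp⟩, Subtype.ext hfg⟩

end FinCardS

open FinCardS

section Relations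

variable {𝒞 : Type*} [Category 𝒞]

structure FinCardSRelations (C : ℕ → 𝒞) (ε : ∀ n i : ℕ, 1 ≤ i → i ≤ n → (C (n + 1) ⟶ C n))
    (σ : ∀ n i : ℕ, 1 ≤ i → i + 1 ≤ n → (C n ⟶ C n)) : Prop where
  eps_comp_eps : ∀ (i j n : ℕ) (h1 : 1 ≤ i) (hij : i ≤ j) (hj : j ≤ n),
    ε (n + 1) i h1 (by omega) ≫ ε n j (by omega) hj
      = ε (n + 1) (j + 1) j.succ_pos (by omega) ≫ ε n i h1 (by omega)
  sig_comp_sig_self : ∀ (i n : ℕ) (h1 : 1 ≤ i) (h2 : i + 1 ≤ n),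
    σ n i h1 h2 ≫ σ n i h1 h2 = 𝟙 (C n)
  sig_braid : ∀ (i n : ℕ) (h1 : 1 ≤ i) (h2 : i + 2 ≤ n),
    σ n i h1 (by omega) ≫ σ n (i + 1) (by omega) h2 ≫ σ n i h1 (by omega)
      = σ n (i + 1) (by omega) h2 ≫ σ n i h1 (by omega) ≫ σ n (i + 1) (by omega) h2
  sig_comm : ∀ (i j n : ℕ) (h1 : 1 ≤ i) (hij : i + 1 < j) (hj : j + 1 ≤ n),
    σ n j (by omega) hj ≫ σ n i h1 (by omega) = σ n i h1 (by omega) ≫ σ n j (by omega) hj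
  eps_comp_sig_of_lt : ∀ (i j n : ℕ) (h1 : 1 ≤ i) (hij : i + 1 < j) (hj : j ≤ n),
    ε n j (by omega) hj ≫ σ n i h1 (by omega) = σ (n + 1) i h1 (by omega) ≫ ε n j (by omega) hj
  eps_comp_sig_of_gt : ∀ (i j n : ℕ) (hj : 1 ≤ j) (hji : j < i) (hi : i + 1 ≤ n),
    ε n j hj (by omega) ≫ σ n i (by omega) hi
      = σ (n + 1) (i + 1) (by omega) (by omega) ≫ ε n j hj (by omega)
  eps_comp_sig_self : ∀ (i n : ℕ) (h1 : 1 ≤ i) (h2 : i + 1 ≤ n),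
    ε n i h1 (by omega) ≫ σ n i h1 h2
      = σ (n + 1) (i + 1) (by omega) (by omega) ≫ σ (n + 1) i h1 (by omega)
          ≫ ε n (i + 1) (by omega) h2
  sig_comp_eps_self : ∀ (i n : ℕ) (h1 : 1 ≤ i) (h2 : i ≤ n),
    σ (n + 1) i h1 (by omega) ≫ ε n i h1 h2 = ε n i h1 h2

namespace FinCardSRelations

variable {C : ℕ → 𝒞} {ε : ∀ n i : ℕ, 1 ≤ i → i ≤ n → (C (n + 1) ⟶ C n)}
  {σ : ∀ n i : ℕ, 1 ≤ i → i + 1 ≤ n → (C n ⟶ C n)}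

theorem sig_comp_sig_self_assoc (hR : FinCardSRelations C ε σ) {n i : ℕ} (h1 : 1 ≤ i)
    (h2 : i + 1 ≤ n) {Z : 𝒞} (h : C n ⟶ Z) : σ n i h1 h2 ≫ σ n i h1 h2 ≫ h = h := by
  rw [← Category.assoc, hR.sig_comp_sig_self, Category.id_comp]

theorem eps_succ_comp_sig (hR : FinCardSRelations C ε σ) (i n : ℕ) (h1 : 1 ≤ i)
    (h2 : i + 1 ≤ n) :
    ε n (i + 1) (by omega) h2 ≫ σ n i h1 h2
      = σ (n + 1) i h1 (by omega) ≫ σ (n + 1) (i + 1) (by omega) (by omega)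
          ≫ ε n i h1 (by omega) := by
  have key : σ (n + 1) (i + 1) (by omega) (by omega) ≫ σ (n + 1) i h1 (by omega)
      ≫ ε n (i + 1) (by omega) h2 ≫ σ n i h1 h2 = ε n i h1 (by omega) := by
    simpa only [Category.assoc, hR.sig_comp_sig_self, Category.comp_id] using
      (congrArg (· ≫ σ n i h1 h2) (hR.eps_comp_sig_self i n h1 h2)).symm
  rw [← key]
  simp only [hR.sig_comp_sig_self_assoc]

end FinCardSRelations

theorem finCardSRelations_finCardS : FinCardSRelations FinCardS.of epsHomS sigmaHomS := by
  constructor <;> intros <;> refine hom_ext_valAt fun k hk => ?_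
  -- split `k` into the intervals on which all generators involved act by `k ↦ k + c`
  case' eps_comp_eps i j _ _ _ _ =>
    rcases (by omega : k < i ∨ (i ≤ k ∧ k ≤ j) ∨ j < k) with h | h | h
  case' sig_comp_sig_self i _ _ _ =>
    rcases (by omega : k + 1 = i ∨ k = i ∨ (k + 1 ≠ i ∧ k ≠ i)) with h | h | h
  case' sig_braid i _ _ _ =>
    rcases (by omega : k + 1 < i ∨ k + 1 = i ∨ k = i ∨ k = i + 1 ∨ i + 1 < k)
      with h | h | h | h | h
  case' sig_comm i j _ _ _ _ =>
    rcases (by omega : k + 1 = i ∨ k = i ∨ k + 1 = j ∨ k = j ∨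
      (k + 1 ≠ i ∧ k ≠ i ∧ k + 1 ≠ j ∧ k ≠ j)) with h | h | h | h | h
  case' eps_comp_sig_of_lt i j _ _ _ _ =>
    rcases (by omega : k + 1 = i ∨ k = i ∨ (k < j ∧ k + 1 ≠ i ∧ k ≠ i) ∨ j ≤ k)
      with h | h | h | h
  case' eps_comp_sig_of_gt i j _ _ _ _ =>
    rcases (by omega : k < j ∨ (j ≤ k ∧ k < i) ∨ k = i ∨ k = i + 1 ∨ i + 1 < k)
      with h | h | h | h | h
  case' eps_comp_sig_self i _ _ _ =>
    rcases (by omega : k + 1 < i ∨ k + 1 = i ∨ k = i ∨ k = i + 1 ∨ i + 1 < k)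
      with h | h | h | h | h
  case' sig_comp_eps_self i _ _ _ =>
    rcases (by omega : k + 1 < i ∨ k + 1 = i ∨ k = i ∨ i < k) with h | h | h | h
  all_goals
    simp (disch := omega) only [valAt_comp, valAt_id, valAt_epsHomS, valAt_sigmaHomS, if_pos,
      if_neg, if_true]
  all_goals omega

end Relations

section Normalization

variable {𝒞 : Type*} [Category 𝒞] {C : ℕ → 𝒞}
  (ε : ∀ n i : ℕ, 1 ≤ i → i ≤ n → (C (n + 1) ⟶ C n))
  (σ : ∀ n i : ℕ, 1 ≤ i → i + 1 ≤ n → (C n ⟶ C n))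

abbrev SurjTo (m : ℕ) := Σ n, FinCardS.of n ⟶ FinCardS.of m

inductive NormStep {m : ℕ} : ∀ x y : SurjTo m, (C x.1 ⟶ C y.1) → Prop
  | sig {n i : ℕ} (h1 : 1 ≤ i) (h2 : i + 1 ≤ n) (f : of n ⟶ of m)
      (hf : valAt f i < valAt f (i - 1)) :
      NormStep ⟨n, f⟩ ⟨n, sigmaHomS n i h1 h2 ≫ f⟩ (σ n i h1 h2)
  | eps {n i : ℕ} (h1 : 1 ≤ i) (h2 : i ≤ n) (f : of (n + 1) ⟶ of m) (g : of n ⟶ of m)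
      (hfg : f = epsHomS n i h1 h2 ≫ g) :
      NormStep ⟨n + 1, f⟩ ⟨n, g⟩ (ε n i h1 h2)

variable {m : ℕ}

theorem normStep_wellFounded : WellFounded fun y x : SurjTo m => ∃ a, NormStep ε σ x y a := by
  refine Subrelation.wf ?_ (InvImage.wf
    (fun x : SurjTo m => (⟨x.1, toLex (x.2.1 : Fin x.1 → Fin m)⟩ : Σ' n, Lex (Fin n → Fin m)))
    (WellFounded.psigma_lex wellFounded_lt fun _ => wellFounded_lt))
  rintro y x ⟨a, h⟩
  cases h with
  | @sig n i h1 h2 f hf =>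
    refine PSigma.Lex.right _ ⟨⟨i - 1, show i - 1 < n by omega⟩, fun k hki => Fin.ext ?_, ?_⟩
    · obtain ⟨k, hk⟩ := k
      have hkn : k < n := hk
      have hki : k < i - 1 := hki
      change ((sigmaHomS n i h1 h2 ≫ f).1 ⟨k, hk⟩ : ℕ) = f.1 ⟨k, hk⟩
      simp (disch := omega) only [val_apply_eq_valAt, valAt_comp, valAt_sigmaHomS, if_neg]
    · change ((sigmaHomS n i h1 h2 ≫ f).1 ⟨i - 1, _⟩ : ℕ) < f.1 ⟨i - 1, show i - 1 < n by omega⟩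
      simp (disch := omega) only [val_apply_eq_valAt, valAt_comp, valAt_sigmaHomS]
      exact hf
  | eps => exact PSigma.Lex.left _ _ (Nat.lt_succ_self _)

theorem not_normStep_id {y : SurjTo m} {a : C m ⟶ C y.1} : ¬NormStep ε σ ⟨m, 𝟙 _⟩ y a := by
  intro h
  cases h with
  | sig h1 h2 _ hf =>
    simp (disch := omega) only [valAt_id] at hf
    omega
  | @eps n i h1 h2 _ g hfg =>
    have h₁ := congrArg (valAt · (i - 1)) hfg
    have h₂ := congrArg (valAt · i) hfg
    simp (disch := omega) only [valAt_id, valAt_comp, valAt_epsHomS, if_pos, if_neg] at h₁ h₂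
    omega

theorem eq_id_of_forall_valAt_lt {n : ℕ} {f : of n ⟶ of m}
    (hf : ∀ i, 1 ≤ i → i < n → valAt f (i - 1) < valAt f i) :
    (⟨n, f⟩ : SurjTo m) = ⟨m, 𝟙 _⟩ := by
  have hlt : StrictMonoOn (valAt f) (Set.Iic (n - 1)) :=
    strictMonoOn_Iic_of_lt_succ fun k hk => by
      simpa [Order.succ_eq_add_one] using hf (k + 1) (by omega) (by omega)
  have hmono : StrictMono f.1 := fun x y hxy => by
    have hx : (x : ℕ) < n := x.2
    have hy : (y : ℕ) < n := y.2
    rw [Fin.lt_def, val_apply_eq_valAt, val_apply_eq_valAt]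
    exact hlt (Set.mem_Iic.2 (by omega)) (Set.mem_Iic.2 (by omega)) hxy
  obtain rfl : n = m := le_antisymm (Fin.le_of_injective _ hmono.injective)
    (Fin.le_of_surjective _ f.2)
  obtain rfl : f = 𝟙 _ := Subtype.ext hmono.eq_id
  rfl

theorem exists_normStep {x : SurjTo m} (hx : x ≠ ⟨m, 𝟙 _⟩) : ∃ y a, NormStep ε σ x y a := by
  obtain ⟨n, f⟩ := x
  by_contra hno
  refine hx (eq_id_of_forall_valAt_lt fun i h1 hi => ?_)
  rcases lt_trichotomy (valAt f i) (valAt f (i - 1)) with hlt | heq | hgt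
  · exact (hno ⟨_, _, .sig h1 hi f hlt⟩).elim
  · obtain ⟨n, rfl⟩ : ∃ n', n = n' + 1 := ⟨n - 1, by omega⟩
    obtain ⟨g, hfg⟩ := exists_eq_epsHomS_comp h1 (by omega) f heq.symm
    exact (hno ⟨_, _, .eps h1 (by omega) f g hfg⟩).elim
  · exact hgt

end Normalization

section Confluence

open LabelledReflTransGen

variable {𝒞 : Type*} [Category 𝒞] {C : ℕ → 𝒞}
  {ε : ∀ n i : ℕ, 1 ≤ i → i ≤ n → (C (n + 1) ⟶ C n)}
  {σ : ∀ n i : ℕ, 1 ≤ i → i + 1 ≤ n → (C n ⟶ C n)} {m : ℕ}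

theorem joinable_of_reduces {x y z : SurjTo m} {n : ℕ} {u u' : of n ⟶ of m} (hu : u = u')
    {a : C x.1 ⟶ C y.1} {b : C x.1 ⟶ C z.1} {p : C y.1 ⟶ C n} {q : C z.1 ⟶ C n}
    (hp : LabelledReflTransGen (NormStep ε σ) y ⟨n, u⟩ p)
    (hq : LabelledReflTransGen (NormStep ε σ) z ⟨n, u'⟩ q) (h : a ≫ p = b ≫ q) :
    Joinable (NormStep ε σ) y z a b := by
  subst hu
  exact ⟨⟨n, u⟩, p, q, hp, hq, h⟩

variable (hR : FinCardSRelations C ε σ)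
include hR

theorem joinable_sig_sig_of_lt {i j n : ℕ} (hi : 1 ≤ i) (hij : i + 1 < j) (hj : j + 1 ≤ n)
    {f : of n ⟶ of m} (hfi : valAt f i < valAt f (i - 1)) (hfj : valAt f j < valAt f (j - 1)) :
    Joinable (NormStep ε σ) (x := ⟨n, f⟩) ⟨n, sigmaHomS n i hi (by omega) ≫ f⟩
      ⟨n, sigmaHomS n j (by omega) hj ≫ f⟩ (σ n i hi (by omega)) (σ n j (by omega) hj) := by
  refine joinable_of_reduces ?_ (.single (.sig (i := j) _ hj _ ?_))
    (.single (.sig (i := i) hi _ _ ?_)) (hR.sig_comm i j n hi hij hj).symm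
  · simpa only [Category.assoc] using
      congrArg (· ≫ f) (finCardSRelations_finCardS.sig_comm i j n hi hij hj)
  · simpa (disch := omega) only [valAt_comp, valAt_sigmaHomS, if_neg] using hfj
  · simpa (disch := omega) only [valAt_comp, valAt_sigmaHomS, if_neg] using hfi

theorem joinable_sig_sig_succ {i n : ℕ} (hi : 1 ≤ i) (hn : i + 2 ≤ n) {f : of n ⟶ of m}
    (hfi : valAt f i < valAt f (i - 1)) (hfi' : valAt f (i + 1) < valAt f i) :
    Joinable (NormStep ε σ) (x := ⟨n, f⟩) ⟨n, sigmaHomS n i hi (by omega) ≫ f⟩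
      ⟨n, sigmaHomS n (i + 1) (by omega) hn ≫ f⟩ (σ n i hi (by omega))
      (σ n (i + 1) (by omega) hn) := by
  refine joinable_of_reduces ?_
    (.head (.sig (i := i + 1) _ hn _ ?_) (.single (.sig (i := i) hi _ _ ?_)))
    (.head (.sig (i := i) hi _ _ ?_) (.single (.sig (i := i + 1) _ hn _ ?_)))
    (hR.sig_braid i n hi hn)
  · simpa only [Category.assoc] using
      congrArg (· ≫ f) (finCardSRelations_finCardS.sig_braid i n hi hn)
  all_goals
    simp (disch := omega) only [valAt_comp, valAt_sigmaHomS, if_neg, if_true, Nat.add_sub_cancel]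
    omega

theorem joinable_sig_sig {i j n : ℕ} (hi1 : 1 ≤ i) (hi2 : i + 1 ≤ n) (hj1 : 1 ≤ j)
    (hj2 : j + 1 ≤ n) {f : of n ⟶ of m} (hfi : valAt f i < valAt f (i - 1))
    (hfj : valAt f j < valAt f (j - 1)) :
    Joinable (NormStep ε σ) (x := ⟨n, f⟩) ⟨n, sigmaHomS n i hi1 hi2 ≫ f⟩
      ⟨n, sigmaHomS n j hj1 hj2 ≫ f⟩ (σ n i hi1 hi2) (σ n j hj1 hj2) := by
  rcases (by omega : i = j ∨ i + 1 < j ∨ j + 1 < i ∨ j = i + 1 ∨ i = j + 1)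
    with rfl | h | h | rfl | rfl
  · exact ⟨_, _, _, .refl _, .refl _, rfl⟩
  · exact joinable_sig_sig_of_lt hR hi1 h hj2 hfi hfj
  · exact (joinable_sig_sig_of_lt hR hj1 h hi2 hfj hfi).symm
  · exact joinable_sig_sig_succ hR hi1 hj2 hfi (by simpa using hfj)
  · exact (joinable_sig_sig_succ hR hj1 hi2 hfj (by simpa using hfi)).symm

theorem joinable_sig_eps_of_lt {i j n : ℕ} (hi : 1 ≤ i) (hij : i + 1 < j) (hj : j ≤ n)
    {g : of n ⟶ of m}
    (hf : valAt (epsHomS n j (by omega) hj ≫ g) i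
      < valAt (epsHomS n j (by omega) hj ≫ g) (i - 1)) :
    Joinable (NormStep ε σ) (x := ⟨n + 1, epsHomS n j (by omega) hj ≫ g⟩)
      ⟨n + 1, sigmaHomS (n + 1) i hi (by omega) ≫ epsHomS n j (by omega) hj ≫ g⟩ ⟨n, g⟩
      (σ (n + 1) i hi (by omega)) (ε n j (by omega) hj) := by
  refine joinable_of_reduces rfl (.single (.eps _ hj _ (sigmaHomS n i hi (by omega) ≫ g) ?_))
    (.single (.sig hi (by omega) g ?_)) (hR.eps_comp_sig_of_lt i j n hi hij hj).symm
  · simpa only [Category.assoc] using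
      congrArg (· ≫ g) (finCardSRelations_finCardS.eps_comp_sig_of_lt i j n hi hij hj).symm
  · simpa (disch := omega) only [valAt_comp, valAt_epsHomS, if_pos] using hf

theorem joinable_sig_eps_of_gt {i j n : ℕ} (hj : 1 ≤ j) (hji : j < i) (hi : i + 1 ≤ n)
    {g : of n ⟶ of m}
    (hf : valAt (epsHomS n j hj (by omega) ≫ g) (i + 1)
      < valAt (epsHomS n j hj (by omega) ≫ g) i) :
    Joinable (NormStep ε σ) (x := ⟨n + 1, epsHomS n j hj (by omega) ≫ g⟩)
      ⟨n + 1, sigmaHomS (n + 1) (i + 1) (by omega) (by omega) ≫ epsHomS n j hj (by omega) ≫ g⟩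
      ⟨n, g⟩ (σ (n + 1) (i + 1) (by omega) (by omega)) (ε n j hj (by omega)) := by
  refine joinable_of_reduces rfl
    (.single (.eps hj _ _ (sigmaHomS n i (by omega) hi ≫ g) ?_))
    (.single (.sig (by omega) hi g ?_)) (hR.eps_comp_sig_of_gt i j n hj hji hi).symm
  · simpa only [Category.assoc] using
      congrArg (· ≫ g) (finCardSRelations_finCardS.eps_comp_sig_of_gt i j n hj hji hi).symm
  · simpa (disch := omega) only [valAt_comp, valAt_epsHomS, if_neg, Nat.add_sub_cancel] using hf

theorem joinable_sig_eps_of_eq_succ {i n : ℕ} (hi : 1 ≤ i) (hn : i + 1 ≤ n) {g : of n ⟶ of m}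
    (hf : valAt (epsHomS n (i + 1) (by omega) hn ≫ g) i
      < valAt (epsHomS n (i + 1) (by omega) hn ≫ g) (i - 1)) :
    Joinable (NormStep ε σ) (x := ⟨n + 1, epsHomS n (i + 1) (by omega) hn ≫ g⟩)
      ⟨n + 1, sigmaHomS (n + 1) i hi (by omega) ≫ epsHomS n (i + 1) (by omega) hn ≫ g⟩ ⟨n, g⟩
      (σ (n + 1) i hi (by omega)) (ε n (i + 1) (by omega) hn) := by
  have hg : valAt g i < valAt g (i - 1) := by
    simpa (disch := omega) only [valAt_comp, valAt_epsHomS, if_pos] using hf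
  refine joinable_of_reduces rfl
    (.head (.sig (i := i + 1) (by omega) (by omega) _ ?_)
      (.single (.eps hi (by omega) _ (sigmaHomS n i hi hn ≫ g) ?_)))
    (.single (.sig hi hn g hg)) (hR.eps_succ_comp_sig i n hi hn).symm
  · simp (disch := omega) only [valAt_comp, valAt_epsHomS, valAt_sigmaHomS, if_pos, if_neg,
      if_true, Nat.add_sub_cancel]
    exact hg
  · simpa only [Category.assoc] using
      congrArg (· ≫ g) (finCardSRelations_finCardS.eps_comp_sig_self i n hi hn).symm

theorem joinable_sig_eps_of_succ_eq {j n : ℕ} (hj : 1 ≤ j) (hn : j + 1 ≤ n) {g : of n ⟶ of m}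
    (hf : valAt (epsHomS n j hj (by omega) ≫ g) (j + 1)
      < valAt (epsHomS n j hj (by omega) ≫ g) j) :
    Joinable (NormStep ε σ) (x := ⟨n + 1, epsHomS n j hj (by omega) ≫ g⟩)
      ⟨n + 1, sigmaHomS (n + 1) (j + 1) (by omega) (by omega) ≫ epsHomS n j hj (by omega) ≫ g⟩
      ⟨n, g⟩ (σ (n + 1) (j + 1) (by omega) (by omega)) (ε n j hj (by omega)) := by
  have hg : valAt g j < valAt g (j - 1) := by
    simpa (disch := omega) only [valAt_comp, valAt_epsHomS, if_pos, if_neg, Nat.add_sub_cancel]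
      using hf
  refine joinable_of_reduces rfl
    (.head (.sig (i := j) hj (by omega) _ ?_)
      (.single (.eps (i := j + 1) (by omega) hn _ (sigmaHomS n j hj hn ≫ g) ?_)))
    (.single (.sig hj hn g hg)) (hR.eps_comp_sig_self j n hj hn).symm
  · simp (disch := omega) only [valAt_comp, valAt_epsHomS, valAt_sigmaHomS, if_pos, if_neg,
      if_true, Nat.add_sub_cancel]
    exact hg
  · simpa only [Category.assoc] using
      congrArg (· ≫ g) (finCardSRelations_finCardS.eps_succ_comp_sig j n hj hn).symm

theorem joinable_sig_eps {i j n : ℕ} (hi1 : 1 ≤ i) (hi2 : i + 1 ≤ n + 1) (hj1 : 1 ≤ j)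
    (hj2 : j ≤ n) {g : of n ⟶ of m}
    (hf : valAt (epsHomS n j hj1 hj2 ≫ g) i < valAt (epsHomS n j hj1 hj2 ≫ g) (i - 1)) :
    Joinable (NormStep ε σ) (x := ⟨n + 1, epsHomS n j hj1 hj2 ≫ g⟩)
      ⟨n + 1, sigmaHomS (n + 1) i hi1 hi2 ≫ epsHomS n j hj1 hj2 ≫ g⟩ ⟨n, g⟩
      (σ (n + 1) i hi1 hi2) (ε n j hj1 hj2) := by
  rcases (by omega : i + 1 < j ∨ j + 1 < i ∨ j = i + 1 ∨ i = j + 1 ∨ i = j)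
    with h | h | rfl | rfl | rfl
  · exact joinable_sig_eps_of_lt hR hi1 h hj2 hf
  · obtain ⟨i, rfl⟩ : ∃ i', i = i' + 1 := ⟨i - 1, by omega⟩
    exact joinable_sig_eps_of_gt hR hj1 (by omega) (by omega) (by simpa using hf)
  · exact joinable_sig_eps_of_eq_succ hR hi1 hj2 hf
  · exact joinable_sig_eps_of_succ_eq hR hj1 (by omega) (by simpa using hf)
  · simp (disch := omega) only [valAt_comp, valAt_epsHomS, if_pos, if_false, lt_self_iff_false]
      at hf

theorem joinable_eps_eps_of_lt {i j n : ℕ} (hi : 1 ≤ i) (hij : i < j) (hj : j ≤ n)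
    {g g' : of n ⟶ of m} (h : epsHomS n i hi (by omega) ≫ g = epsHomS n j (by omega) hj ≫ g') :
    Joinable (NormStep ε σ) (x := ⟨n + 1, epsHomS n i hi (by omega) ≫ g⟩) ⟨n, g⟩ ⟨n, g'⟩
      (ε n i hi (by omega)) (ε n j (by omega) hj) := by
  obtain ⟨j, rfl⟩ : ∃ j', j = j' + 1 := ⟨j - 1, by omega⟩
  obtain ⟨n, rfl⟩ : ∃ n', n = n' + 1 := ⟨n - 1, by omega⟩
  have hdup : valAt g (j - 1) = valAt g j := by
    have h₁ := congrArg (valAt · j) h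
    have h₂ := congrArg (valAt · (j + 1)) h
    simp (disch := omega) only [valAt_comp, valAt_epsHomS, if_pos, if_neg, Nat.add_sub_cancel]
      at h₁ h₂
    omega
  have hj1 : 1 ≤ j := hi.trans (Nat.lt_succ_iff.mp hij)
  obtain ⟨w, rfl⟩ := exists_eq_epsHomS_comp hj1 (Nat.succ_le_succ_iff.mp hj) g hdup
  obtain rfl : g' = epsHomS n i hi (by omega) ≫ w := by
    rw [← cancel_epi (epsHomS (n + 1) (j + 1) (by omega) hj), ← h]
    simpa only [Category.assoc] using
      congrArg (· ≫ w) (finCardSRelations_finCardS.eps_comp_eps i j n hi (by omega) (by omega))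
  exact ⟨_, _, _, .single (.eps _ _ _ w rfl), .single (.eps _ _ _ w rfl),
    hR.eps_comp_eps i j n hi (by omega) (by omega)⟩

theorem joinable_eps_eps {i j n : ℕ} (hi1 : 1 ≤ i) (hi2 : i ≤ n) (hj1 : 1 ≤ j) (hj2 : j ≤ n)
    {g g' : of n ⟶ of m} (h : epsHomS n i hi1 hi2 ≫ g = epsHomS n j hj1 hj2 ≫ g') :
    Joinable (NormStep ε σ) (x := ⟨n + 1, epsHomS n i hi1 hi2 ≫ g⟩) ⟨n, g⟩ ⟨n, g'⟩
      (ε n i hi1 hi2) (ε n j hj1 hj2) := by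
  rcases lt_trichotomy i j with hij | rfl | hij
  · exact joinable_eps_eps_of_lt hR hi1 hij hj2 h
  · obtain rfl := (cancel_epi _).1 h
    exact ⟨_, _, _, .refl _, .refl _, rfl⟩
  · exact (joinable_eps_eps_of_lt hR hj1 hij hi2 h.symm).symm

theorem normStep_joinable {x y z : SurjTo m} {a : C x.1 ⟶ C y.1} {b : C x.1 ⟶ C z.1}
    (ha : NormStep ε σ x y a) (hb : NormStep ε σ x z b) : Joinable (NormStep ε σ) y z a b := by
  cases ha with
  | sig hi1 hi2 f hfi =>
    cases hb with
    | sig hj1 hj2 _ hfj => exact joinable_sig_sig hR hi1 hi2 hj1 hj2 hfi hfj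
    | eps hj1 hj2 _ g hfg =>
      subst hfg
      exact joinable_sig_eps hR hi1 hi2 hj1 hj2 hfi
  | eps hi1 hi2 f g hfg =>
    subst hfg
    cases hb with
    | sig hj1 hj2 _ hfj => exact (joinable_sig_eps hR hj1 hj2 hi1 hi2 hfj).symm
    | eps hj1 hj2 _ g' hfg' => exact joinable_eps_eps hR hi1 hi2 hj1 hj2 hfg'

end Confluence

section Functor

open LabelledReflTransGen

variable {𝒞 : Type*} [Category 𝒞] {C : ℕ → 𝒞}
  (ε : ∀ n i : ℕ, 1 ≤ i → i ≤ n → (C (n + 1) ⟶ C n))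
  (σ : ∀ n i : ℕ, 1 ≤ i → i + 1 ≤ n → (C n ⟶ C n)) {m : ℕ}

theorem exists_normStep_reduction (x : SurjTo m) :
    ∃ p, LabelledReflTransGen (NormStep ε σ) x ⟨m, 𝟙 _⟩ p :=
  exists_of_wellFounded (normStep_wellFounded ε σ) (fun _ hx => exists_normStep ε σ hx) x

/-- The label of some reduction of `x` to the identity; by `FinCardSRelations.eq_normLabel` every
such reduction has this label. -/
noncomputable def normLabel (x : SurjTo m) : C x.1 ⟶ C m :=
  (exists_normStep_reduction ε σ x).choose

theorem normLabel_spec (x : SurjTo m) :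
    LabelledReflTransGen (NormStep ε σ) x ⟨m, 𝟙 _⟩ (normLabel ε σ x) :=
  (exists_normStep_reduction ε σ x).choose_spec

theorem eq_normLabel_comp {T : 𝒞} (Φ : ∀ n, (of n ⟶ of m) → (C n ⟶ T))
    (hσ : ∀ n i h1 h2 f, Φ n (sigmaHomS n i h1 h2 ≫ f) = σ n i h1 h2 ≫ Φ n f)
    (hε : ∀ n i h1 h2 g, Φ (n + 1) (epsHomS n i h1 h2 ≫ g) = ε n i h1 h2 ≫ Φ n g)
    {n : ℕ} (f : of n ⟶ of m) : Φ n f = normLabel ε σ ⟨n, f⟩ ≫ Φ m (𝟙 _) := by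
  refine (normLabel_spec ε σ ⟨n, f⟩).eq_comp (Φ := fun x : SurjTo m => Φ x.1 x.2) fun x y a h => ?_
  cases h with
  | sig h1 h2 f =>
    rw [← hσ, ← Category.assoc, finCardSRelations_finCardS.sig_comp_sig_self, Category.id_comp]
  | eps h1 h2 f g hfg =>
    subst hfg
    exact hε _ _ h1 h2 g

variable {ε σ} (hR : FinCardSRelations C ε σ)
include hR

namespace FinCardSRelations

theorem eq_normLabel {x : SurjTo m} {p : C x.1 ⟶ C m}
    (hp : LabelledReflTransGen (NormStep ε σ) x ⟨m, 𝟙 _⟩ p) : p = normLabel ε σ x :=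
  eq_of_wellFounded (normStep_wellFounded ε σ) (fun _ _ => not_normStep_id ε σ)
    (fun _ hx => exists_normStep ε σ hx) (fun _ _ _ _ _ => normStep_joinable hR) hp
    (normLabel_spec ε σ x)

theorem normLabel_of_normStep {x y : SurjTo m} {a : C x.1 ⟶ C y.1} (h : NormStep ε σ x y a) :
    normLabel ε σ x = a ≫ normLabel ε σ y :=
  (hR.eq_normLabel (.head h (normLabel_spec ε σ y))).symm

theorem normLabel_id : normLabel ε σ ⟨m, 𝟙 (of m)⟩ = 𝟙 (C m) :=
  (hR.eq_normLabel (.refl _)).symm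

theorem normLabel_epsHomS_comp {n i : ℕ} (h1 : 1 ≤ i) (h2 : i ≤ n) (g : of n ⟶ of m) :
    normLabel ε σ ⟨n + 1, epsHomS n i h1 h2 ≫ g⟩ = ε n i h1 h2 ≫ normLabel ε σ ⟨n, g⟩ :=
  hR.normLabel_of_normStep (.eps h1 h2 _ g rfl)

theorem normLabel_sigmaHomS_comp {n i : ℕ} (h1 : 1 ≤ i) (h2 : i + 1 ≤ n) (f : of n ⟶ of m) :
    normLabel ε σ ⟨n, sigmaHomS n i h1 h2 ≫ f⟩ = σ n i h1 h2 ≫ normLabel ε σ ⟨n, f⟩ := by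
  rcases lt_trichotomy (valAt f i) (valAt f (i - 1)) with hlt | heq | hgt
  · rw [hR.normLabel_of_normStep (.sig h1 h2 f hlt), hR.sig_comp_sig_self_assoc]
  · obtain ⟨n, rfl⟩ : ∃ n', n = n' + 1 := ⟨n - 1, by omega⟩
    obtain ⟨g, rfl⟩ := exists_eq_epsHomS_comp h1 (Nat.le_of_succ_le_succ h2) f heq.symm
    rw [← Category.assoc, finCardSRelations_finCardS.sig_comp_eps_self,
      hR.normLabel_epsHomS_comp, ← Category.assoc, hR.sig_comp_eps_self]
  · have hf : valAt (sigmaHomS n i h1 h2 ≫ f) i < valAt (sigmaHomS n i h1 h2 ≫ f) (i - 1) := by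
      simpa (disch := omega) only [valAt_comp, valAt_sigmaHomS, if_neg, if_true] using hgt
    rw [hR.normLabel_of_normStep (.sig h1 h2 _ hf), ← Category.assoc,
      finCardSRelations_finCardS.sig_comp_sig_self, Category.id_comp]

theorem normLabel_comp {n l : ℕ} (f : of n ⟶ of m) (g : of m ⟶ of l) :
    normLabel ε σ ⟨n, f ≫ g⟩ = normLabel ε σ ⟨n, f⟩ ≫ normLabel ε σ ⟨m, g⟩ := by
  have := eq_normLabel_comp ε σ (fun n h => normLabel ε σ ⟨n, h ≫ g⟩)
    (fun n i h1 h2 f => by rw [Category.assoc]; exact hR.normLabel_sigmaHomS_comp h1 h2 (f ≫ g))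
    (fun n i h1 h2 f => by rw [Category.assoc]; exact hR.normLabel_epsHomS_comp h1 h2 (f ≫ g)) f
  rwa [Category.id_comp] at this

noncomputable def functor : FinCardS ⥤ 𝒞 where
  obj X := C X.len
  map {X Y} f := normLabel ε σ (m := Y.len) ⟨X.len, f⟩
  map_id _ := hR.normLabel_id
  map_comp f g := hR.normLabel_comp f g

theorem functor_map_epsHomS {n i : ℕ} (h1 : 1 ≤ i) (h2 : i ≤ n) :
    hR.functor.map (epsHomS n i h1 h2) = ε n i h1 h2 := by
  have := hR.normLabel_epsHomS_comp h1 h2 (𝟙 _)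
  rwa [Category.comp_id, hR.normLabel_id, Category.comp_id] at this

theorem functor_map_sigmaHomS {n i : ℕ} (h1 : 1 ≤ i) (h2 : i + 1 ≤ n) :
    hR.functor.map (sigmaHomS n i h1 h2) = σ n i h1 h2 := by
  have := hR.normLabel_sigmaHomS_comp h1 h2 (𝟙 _)
  rwa [Category.comp_id, hR.normLabel_id, Category.comp_id] at this

theorem eq_functor (G : FinCardS ⥤ 𝒞) (hobj : ∀ n : ℕ, G.obj (of n) = C n)
    (hε : ∀ (n i : ℕ) (h1 : 1 ≤ i) (h2 : i ≤ n),
      G.map (epsHomS n i h1 h2) = eqToHom (hobj (n + 1)) ≫ ε n i h1 h2 ≫ eqToHom (hobj n).symm)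
    (hσ : ∀ (n i : ℕ) (h1 : 1 ≤ i) (h2 : i + 1 ≤ n),
      G.map (sigmaHomS n i h1 h2) = eqToHom (hobj n) ≫ σ n i h1 h2 ≫ eqToHom (hobj n).symm) :
    G = hR.functor := by
  refine CategoryTheory.Functor.ext (fun X => hobj X.len) fun X Y f => ?_
  have := eq_normLabel_comp ε σ (fun n h => eqToHom (hobj n).symm ≫ G.map h)
    (fun n i h1 h2 f => by simp [hσ]) (fun n i h1 h2 g => by simp [hε]) f
  rw [G.map_id, Category.comp_id] at this
  have h := eqToHom (hobj X.len) ≫= this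
  rw [eqToHom_trans_assoc, eqToHom_refl, Category.id_comp] at h
  exact h

end FinCardSRelations

end Functor

/-- STATEMENT 6: given a graded object `Cobj` of a category `𝒞` together with morphisms
`ε^n_i : C_{n+1} ⟶ C_n` and `σ^n_i : C_n ⟶ C_n` satisfying the pure codegeneracy
relations, the Moore relations, and the codegeneracy–symmetry relations, there is a
unique functor `F : finCard_s ⥤ 𝒞` with `F(n) = C_n`, `F(ε^n_i) = ε^n_i` and
`F(σ^n_i) = σ^n_i`. -/
theorem unique_functor_from_finCardS_of_relations
    (𝒞 : Type*) [Category 𝒞] (Cobj : ℕ → 𝒞)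
    (eps' : ∀ (n i : ℕ), 1 ≤ i → i ≤ n → (Cobj (n + 1) ⟶ Cobj n))
    (sig' : ∀ (n i : ℕ), 1 ≤ i → i + 1 ≤ n → (Cobj n ⟶ Cobj n))
    -- pure codegeneracy relations: ε_i ; ε_j = ε_{j+1} ; ε_i  (i ≤ j)
    (rel_ee : ∀ (n i j : ℕ) (h1 : 1 ≤ i) (hij : i ≤ j) (hj : j ≤ n),
      eps' (n + 1) i h1 (by omega) ≫ eps' n j (by omega) hj
        = eps' (n + 1) (j + 1) (by omega) (by omega) ≫ eps' n i h1 (by omega))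
    -- Moore relations
    (rel_ss : ∀ (n i : ℕ) (h1 : 1 ≤ i) (h2 : i + 1 ≤ n),
      sig' n i h1 h2 ≫ sig' n i h1 h2 = 𝟙 (Cobj n))
    (rel_braid : ∀ (n i : ℕ) (h1 : 1 ≤ i) (h2 : i + 2 ≤ n),
      sig' n i h1 (by omega) ≫ sig' n (i + 1) (by omega) (by omega) ≫ sig' n i h1 (by omega)
        = sig' n (i + 1) (by omega) (by omega) ≫ sig' n i h1 (by omega)
            ≫ sig' n (i + 1) (by omega) (by omega))
    (rel_comm : ∀ (n i j : ℕ) (h1 : 1 ≤ i) (hij : i + 1 < j) (hj : j + 1 ≤ n),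
      sig' n j (by omega) hj ≫ sig' n i h1 (by omega)
        = sig' n i h1 (by omega) ≫ sig' n j (by omega) hj)
    -- codegeneracy–symmetry relations
    (rel_es1 : ∀ (n i j : ℕ) (h1 : 1 ≤ i) (hij : i + 1 < j) (hj : j ≤ n),
      eps' n j (by omega) hj ≫ sig' n i h1 (by omega)
        = sig' (n + 1) i h1 (by omega) ≫ eps' n j (by omega) hj)
    (rel_es2 : ∀ (n i j : ℕ) (hj : 1 ≤ j) (hji : j < i) (hi : i + 1 ≤ n),
      eps' n j hj (by omega) ≫ sig' n i (by omega) hi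
        = sig' (n + 1) (i + 1) (by omega) (by omega) ≫ eps' n j hj (by omega))
    (rel_es3 : ∀ (n i : ℕ) (h1 : 1 ≤ i) (h2 : i + 1 ≤ n),
      eps' n i h1 (by omega) ≫ sig' n i h1 h2
        = sig' (n + 1) (i + 1) (by omega) (by omega) ≫ sig' (n + 1) i h1 (by omega)
            ≫ eps' n (i + 1) (by omega) h2)
    (rel_es4 : ∀ (n i : ℕ) (h1 : 1 ≤ i) (h2 : i ≤ n),
      sig' (n + 1) i h1 (by omega) ≫ eps' n i h1 h2 = eps' n i h1 h2) :
    ∃! F : FinCardS ⥤ 𝒞,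
      ∃ hobj : ∀ n : ℕ, F.obj (FinCardS.of n) = Cobj n,
        (∀ (n i : ℕ) (h1 : 1 ≤ i) (h2 : i ≤ n),
          F.map (epsHomS n i h1 h2)
            = eqToHom (hobj (n + 1)) ≫ eps' n i h1 h2 ≫ eqToHom (hobj n).symm) ∧
        (∀ (n i : ℕ) (h1 : 1 ≤ i) (h2 : i + 1 ≤ n),
          F.map (sigmaHomS n i h1 h2)
            = eqToHom (hobj n) ≫ sig' n i h1 h2 ≫ eqToHom (hobj n).symm) := by
  have hR : FinCardSRelations Cobj eps' sig' :=
    ⟨fun i j n => rel_ee n i j, fun i n => rel_ss n i, fun i n => rel_braid n i,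
      fun i j n => rel_comm n i j, fun i j n => rel_es1 n i j, fun i j n => rel_es2 n i j,
      fun i n => rel_es3 n i, fun i n => rel_es4 n i⟩
  refine ⟨hR.functor, ⟨fun _ => rfl, fun n i h1 h2 => ?_, fun n i h1 h2 => ?_⟩, ?_⟩
  · change _ = 𝟙 (Cobj (n + 1)) ≫ _ ≫ 𝟙 (Cobj n)
    rw [Category.id_comp, Category.comp_id]
    exact hR.functor_map_epsHomS h1 h2
  · change _ = 𝟙 (Cobj n) ≫ _ ≫ 𝟙 (Cobj n)
    rw [Category.id_comp, Category.comp_id]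
    exact hR.functor_map_sigmaHomS h1 h2
  · rintro G ⟨hobj, hε, hσ⟩
    exact hR.eq_functor G hobj hε hσ
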